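/- Under the standing assumptions on φ and φ_λ, let 𝒟 := {x ∈ H : ∃ z ∈ ℝ^m with S(x,z) < h(x)}. Then φ is continuous at every point of 𝒟, and for every fixed λ > 0 the function φ_λ is continuous at every point of 𝒟 (with respect to the norm topology of H). (Theorem 3.1(e).) -/

import Mathlib

/-!
For fixed `x`, the function `z ↦ S(x, z)` is convex with a Slater point, so its level set
`{z | S(x, z) = h(x)}` lies in the frontier of a convex set and is Lebesgue-null. As the law of `ξ`
has a density, `S(x, ξ) ≠ h(x)` almost surely, and then the indicators of `{S(x', ξ) ≤ h(x')}`
converge almost surely as `x' → x`; dominated convergence gives continuity of `φ` at `x`.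

This needs `S` to be jointly continuous. It is convex as a supremum of convex scalarizations, and
locally bounded above because the weak*-compact set `C` is norm-bounded (uniform boundedness);
a convex function locally bounded above is continuous. The Moreau envelope of `S` is finite (`S`
has a continuous affine minorant), convex (an infimal projection of a jointly convex function)
and below `S`, so it is continuous too and inherits the Slater point: the same argument applies
to `φ_λ`.
-/

open Filter Topology MeasureTheory

/-- The Moreau envelope of a function `S : H × E → ℝ` (in two arguments) with parameter
`lam`, for the Hilbert norm of the product. -/
noncomputable def moreauEnv2 {H E : Type*} [NormedAddCommGroup H] [InnerProductSpace ℝ H]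
    [NormedAddCommGroup E] [InnerProductSpace ℝ E]
    (S : H → E → ℝ) (lam : ℝ) (x : H) (z : E) : ℝ :=
  ⨅ u : H × E, (S u.1 u.2 + (‖x - u.1‖ ^ 2 + ‖z - u.2‖ ^ 2) / (2 * lam))

/-- Weak (sequential) convergence in a Hilbert space: `⟪x_k, y⟫ → ⟪x₀, y⟫` for every `y`. -/
def WeakSeqTendsto {H : Type*} [NormedAddCommGroup H] [InnerProductSpace ℝ H]
    (x : ℕ → H) (x₀ : H) : Prop :=
  ∀ y : H, Tendsto (fun k => (inner ℝ (x k) y : ℝ)) atTop (𝓝 (inner ℝ x₀ y))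

open Set Function

theorem ConvexOn.uncurry_left {E F : Type*} [AddCommGroup E] [Module ℝ E] [AddCommGroup F]
    [Module ℝ F] {g : E → F → ℝ} (hg : ConvexOn ℝ univ (uncurry g)) (x : E) :
    ConvexOn ℝ univ (g x) := by
  simpa [comp_def] using hg.comp_affineMap ((AffineMap.const ℝ F x).prod (AffineMap.id ℝ F))

theorem ConvexOn.ciSup {ι E : Type*} [Nonempty ι] [AddCommGroup E] [Module ℝ E] {s : Set E}
    {f : ι → E → ℝ} (hf : ∀ i, ConvexOn ℝ s (f i))
    (hbdd : ∀ x ∈ s, BddAbove (range fun i => f i x)) :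
    ConvexOn ℝ s fun x => ⨆ i, f i x := by
  refine ⟨(hf (Classical.arbitrary ι)).1, fun x hx y hy a b ha hb hab => ciSup_le fun i => ?_⟩
  calc f i (a • x + b • y) ≤ a • f i x + b • f i y := (hf i).2 hx hy ha hb hab
    _ ≤ a • (⨆ i, f i x) + b • (⨆ i, f i y) := by
      gcongr
      exacts [le_ciSup (hbdd x hx) i, le_ciSup (hbdd y hy) i]

theorem ConvexOn.iInf_snd {E U : Type*} [AddCommGroup E] [Module ℝ E] [AddCommGroup U]
    [Module ℝ U] [Nonempty U] {F : E × U → ℝ} (hF : ConvexOn ℝ univ F)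
    (hbdd : ∀ w, BddBelow (range fun u => F (w, u))) :
    ConvexOn ℝ univ fun w => ⨅ u, F (w, u) := by
  refine ⟨convex_univ, fun p _ q _ a b ha hb hab => le_of_forall_pos_le_add fun ε hε => ?_⟩
  obtain ⟨u₁, hu₁⟩ := exists_lt_of_ciInf_lt (lt_add_of_pos_right (⨅ u, F (p, u)) hε)
  obtain ⟨u₂, hu₂⟩ := exists_lt_of_ciInf_lt (lt_add_of_pos_right (⨅ u, F (q, u)) hε)
  calc ⨅ u, F (a • p + b • q, u) ≤ F (a • (p, u₁) + b • (q, u₂)) := ciInf_le (hbdd _) _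
    _ ≤ a • F (p, u₁) + b • F (q, u₂) := hF.2 trivial trivial ha hb hab
    _ ≤ a • ((⨅ u, F (p, u)) + ε) + b • ((⨅ u, F (q, u)) + ε) := by gcongr
    _ = a • (⨅ u, F (p, u)) + b • (⨅ u, F (q, u)) + ε := by
      simp only [smul_eq_mul]; linear_combination ε * hab

theorem convexOn_norm_comp_sq {V W : Type*} [AddCommGroup V] [Module ℝ V]
    [SeminormedAddCommGroup W] [NormedSpace ℝ W] (L : V →ₗ[ℝ] W) :
    ConvexOn ℝ univ fun v => ‖L v‖ ^ 2 :=
  ((convexOn_norm convex_univ).comp_linearMap L).pow (fun _ _ => norm_nonneg _) 2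

theorem ConvexOn.continuous_of_le {E : Type*} [NormedAddCommGroup E] [NormedSpace ℝ E]
    {f g : E → ℝ} (hf : ConvexOn ℝ univ f) (hg : Continuous g) (hfg : f ≤ g) : Continuous f := by
  have hbdd : (𝓝 (0 : E)).IsBoundedUnder (· ≤ ·) f :=
    isBoundedUnder_of_eventually_le ((hg.tendsto 0).eventually_le_const (lt_add_one (g 0)) |>.mono
      fun x hx => (hfg x).trans hx)
  have htfae := (hf.continuousOn_tfae isOpen_univ univ_nonempty).out 3 1
  exact continuousOn_univ.1 (htfae.1 ⟨0, mem_univ _, hbdd⟩)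

theorem ConvexOn.exists_continuousLinearMap_add_const_le {E : Type*} [NormedAddCommGroup E]
    [NormedSpace ℝ E] {f : E → ℝ} (hf : ConvexOn ℝ univ f) (hfc : LowerSemicontinuous f) :
    ∃ (ℓ : E →L[ℝ] ℝ) (c : ℝ), ∀ x, ℓ x + c ≤ f x := by
  obtain hempty | ⟨g, hgf, ℓ, c, rfl⟩ :=
    {g | g ≤ f ∧ ∃ (ℓ : E →L[ℝ] ℝ) (c : ℝ), g = ℓ + const E c}.eq_empty_or_nonempty
  · -- `sSup ∅ = 0` in `ℝ`, so then `f = 0`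
    refine ⟨0, 0, fun x => ?_⟩
    have hfx := congrFun (hf.real_univ_sSup_affine_eq hfc) x
    simp only [hempty, sSup_apply, Real.iSup_of_isEmpty] at hfx
    simp [← hfx]
  · exact ⟨ℓ, c, hgf⟩

section ConvexLevelSet

variable {F : Type*} [NormedAddCommGroup F] [NormedSpace ℝ F] {f : F → ℝ} {c : ℝ} {z₀ : F}

theorem ConvexOn.setOf_eq_subset_frontier (hf : ConvexOn ℝ univ f) (hz₀ : f z₀ < c) :
    {z | f z = c} ⊆ frontier {z | f z ≤ c} := by
  intro z hz
  refine ⟨subset_closure hz.le, fun hint => ?_⟩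
  -- By convexity, stepping past `z` away from the Slater point `z₀` pushes `f` above `c`.
  have hray : Tendsto (fun t : ℝ => z + t • (z - z₀)) (𝓝[>] 0) (𝓝 z) := by
    have hcont : Continuous fun t : ℝ => z + t • (z - z₀) := by fun_prop
    exact (hcont.tendsto' 0 z (by simp)).mono_left nhdsWithin_le_nhds
  obtain ⟨t, hmem, ht : 0 < t⟩ :=
    ((hray.eventually (isOpen_interior.mem_nhds hint)).and self_mem_nhdsWithin).exists
  have hseg : z ∈ openSegment ℝ z₀ (z + t • (z - z₀)) := by
    refine ⟨t / (1 + t), 1 / (1 + t), by positivity, by positivity, by field_simp; ring, ?_⟩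
    match_scalars
    all_goals field_simp
    all_goals ring
  have hlt := hf.lt_right_of_left_lt trivial trivial hseg (hz₀.trans_eq hz.symm)
  have hle : f (z + t • (z - z₀)) ≤ c := interior_subset (s := {z | f z ≤ c}) hmem
  exact hle.not_gt (hz ▸ hlt)

theorem ConvexOn.addHaar_setOf_eq [MeasurableSpace F] [BorelSpace F] [FiniteDimensional ℝ F]
    (μ : Measure F) [μ.IsAddHaarMeasure] (hf : ConvexOn ℝ univ f) (hz₀ : f z₀ < c) :
    μ {z | f z = c} = 0 :=
  measure_mono_null (hf.setOf_eq_subset_frontier hz₀)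
    (by simpa using (hf.convex_le c).addHaar_frontier μ)

end ConvexLevelSet

theorem continuousAt_toReal_measure_setOf_le {X Ω : Type*} [TopologicalSpace X]
    [FirstCountableTopology X] [MeasurableSpace Ω] (P : Measure Ω) [IsFiniteMeasure P]
    {G : X → Ω → ℝ} {k : X → ℝ} {x₀ : X} (hmeas : ∀ x, MeasurableSet {ω | G x ω ≤ k x})
    (hG : ∀ ω, ContinuousAt (G · ω) x₀) (hk : ContinuousAt k x₀)
    (hnull : ∀ᵐ ω ∂P, G x₀ ω ≠ k x₀) :
    ContinuousAt (fun x => (P {ω | G x ω ≤ k x}).toReal) x₀ := by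
  refine (ENNReal.tendsto_toReal (measure_ne_top P _)).comp
    (tendsto_measure_of_ae_tendsto_indicator_of_isFiniteMeasure _ (hmeas x₀) hmeas ?_)
  filter_upwards [hnull] with ω hω
  rcases hω.lt_or_gt with hlt | hgt
  · filter_upwards [(hG ω).eventually_lt hk hlt] with x hx
    exact iff_of_true hx.le hlt.le
  · filter_upwards [hk.eventually_lt (hG ω) hgt] with x hx
    exact iff_of_false (not_le.2 hx) (not_le.2 hgt)

theorem continuousAt_toReal_measure_setOf_le_of_convexOn {X F Ω : Type*} [TopologicalSpace X]
    [FirstCountableTopology X] [NormedAddCommGroup F] [NormedSpace ℝ F] [FiniteDimensional ℝ F]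
    [MeasurableSpace F] [BorelSpace F] (μ : Measure F) [μ.IsAddHaarMeasure]
    [MeasurableSpace Ω] (P : Measure Ω) [IsFiniteMeasure P] {ξ : Ω → F} (hξ : Measurable ξ)
    (hlaw : P.map ξ ≪ μ) {g : X → F → ℝ} (hg : Continuous (uncurry g)) {k : X → ℝ} {x₀ : X}
    (hk : ContinuousAt k x₀) (hconv : ConvexOn ℝ univ (g x₀)) {z₀ : F} (hz₀ : g x₀ z₀ < k x₀) :
    ContinuousAt (fun x => (P {ω | g x (ξ ω) ≤ k x}).toReal) x₀ := by
  have hlevel : ∀ᵐ z ∂μ, g x₀ z ≠ k x₀ := by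
    rw [ae_iff]
    simpa using hconv.addHaar_setOf_eq μ hz₀
  refine continuousAt_toReal_measure_setOf_le P (fun x => ?_) (fun ω => ?_) hk
    (ae_of_ae_map hξ.aemeasurable (hlaw.ae_le hlevel))
  · exact hξ (isClosed_le (hg.comp (Continuous.prodMk_right x)) continuous_const).measurableSet
  · exact (hg.comp (Continuous.prodMk_left (ξ ω))).continuousAt

theorem IsCompact.exists_forall_apply_le_mul_norm {Y : Type*} [NormedAddCommGroup Y]
    [NormedSpace ℝ Y] [CompleteSpace Y] {C : Set (WeakDual ℝ Y)} (hC : IsCompact C) :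
    ∃ B, ∀ v ∈ C, ∀ y, v y ≤ B * ‖y‖ := by
  obtain ⟨B, hB⟩ := isBounded_iff_forall_norm_le.1
    (WeakDual.isBounded_iff_isVonNBounded.2 (hC.isVonNBounded ℝ))
  refine ⟨B, fun v hv y => ?_⟩
  calc v y ≤ ‖WeakDual.toStrongDual v y‖ := le_abs_self _
    _ ≤ ‖WeakDual.toStrongDual v‖ * ‖y‖ := (WeakDual.toStrongDual v).le_opNorm y
    _ ≤ B * ‖y‖ := by gcongr; exact hB _ hv

section SupOfScalarizations

variable {Q Y : Type*} [NormedAddCommGroup Q] [NormedSpace ℝ Q] [NormedAddCommGroup Y]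
  [NormedSpace ℝ Y] [CompleteSpace Y] {C : Set (WeakDual ℝ Y)} [Nonempty C] {Φ : Q → Y}
  {h : Q → ℝ}

theorem IsCompact.convexOn_iSup_apply_add (hC : IsCompact C)
    (hconv : ∀ v ∈ C, ConvexOn ℝ univ fun q => v (Φ q) + h q) :
    ConvexOn ℝ univ fun q => ⨆ v : C, ((v : WeakDual ℝ Y) (Φ q) + h q) := by
  obtain ⟨B, hB⟩ := hC.exists_forall_apply_le_mul_norm
  exact ConvexOn.ciSup (fun v => hconv v v.2) fun q _ =>
    ⟨B * ‖Φ q‖ + h q, forall_mem_range.2 fun v => add_le_add_left (hB v v.2 _) _⟩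

theorem IsCompact.continuous_iSup_apply_add (hC : IsCompact C) (hΦ : Continuous Φ)
    (hh : Continuous h) (hconv : ∀ v ∈ C, ConvexOn ℝ univ fun q => v (Φ q) + h q) :
    Continuous fun q => ⨆ v : C, ((v : WeakDual ℝ Y) (Φ q) + h q) := by
  obtain ⟨B, hB⟩ := hC.exists_forall_apply_le_mul_norm
  exact (hC.convexOn_iSup_apply_add hconv).continuous_of_le (g := fun q => B * ‖Φ q‖ + h q)
    (by fun_prop) fun q => ciSup_le fun v => add_le_add_left (hB v v.2 _) _

end SupOfScalarizations

theorem ContinuousLinearMap.apply_sub_le_apply_add_norm_sub_sq_div {E : Type*}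
    [SeminormedAddCommGroup E] [NormedSpace ℝ E] (ℓ : E →L[ℝ] ℝ) {lam : ℝ} (hlam : 0 < lam)
    (x u : E) : ℓ x - lam * ‖ℓ‖ ^ 2 / 2 ≤ ℓ u + ‖x - u‖ ^ 2 / (2 * lam) := by
  have hℓ : ℓ x - ℓ u ≤ ‖ℓ‖ * ‖x - u‖ := by
    rw [← map_sub]
    exact (le_abs_self _).trans (ℓ.le_opNorm _)
  have hamgm : ‖ℓ‖ * ‖x - u‖ ≤ lam * ‖ℓ‖ ^ 2 / 2 + ‖x - u‖ ^ 2 / (2 * lam) := by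
    rw [div_add_div _ _ two_ne_zero (by positivity), le_div_iff₀ (by positivity)]
    nlinarith [sq_nonneg (lam * ‖ℓ‖ - ‖x - u‖)]
  linarith

theorem Prod.norm_sq_le {E F : Type*} [SeminormedAddCommGroup E] [SeminormedAddCommGroup F]
    (w : E × F) : ‖w‖ ^ 2 ≤ ‖w.1‖ ^ 2 + ‖w.2‖ ^ 2 := by
  rw [Prod.norm_def]
  rcases max_choice ‖w.1‖ ‖w.2‖ with h | h <;> rw [h] <;>
    nlinarith [sq_nonneg ‖w.1‖, sq_nonneg ‖w.2‖]

section MoreauEnvelope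

variable {H E : Type*} [NormedAddCommGroup H] [InnerProductSpace ℝ H] [NormedAddCommGroup E]
  [InnerProductSpace ℝ E] {S : H → E → ℝ} {lam : ℝ} {ℓ : H × E →L[ℝ] ℝ} {c : ℝ}

theorem bddBelow_range_moreauEnv2 (hlam : 0 < lam) (hℓ : ∀ u, ℓ u + c ≤ S u.1 u.2)
    (x : H) (z : E) :
    BddBelow (range fun u : H × E => S u.1 u.2 + (‖x - u.1‖ ^ 2 + ‖z - u.2‖ ^ 2) / (2 * lam)) := by
  refine ⟨ℓ (x, z) - lam * ‖ℓ‖ ^ 2 / 2 + c, ?_⟩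
  rintro _ ⟨u, rfl⟩
  have hquad := ℓ.apply_sub_le_apply_add_norm_sub_sq_div hlam (x, z) u
  have hprod : ‖(x, z) - u‖ ^ 2 / (2 * lam) ≤ (‖x - u.1‖ ^ 2 + ‖z - u.2‖ ^ 2) / (2 * lam) := by
    gcongr
    exact Prod.norm_sq_le _
  linarith [hℓ u]

theorem moreauEnv2_le (hlam : 0 < lam) (hℓ : ∀ u, ℓ u + c ≤ S u.1 u.2) (x : H) (z : E) :
    moreauEnv2 S lam x z ≤ S x z := by
  simpa [moreauEnv2] using ciInf_le (bddBelow_range_moreauEnv2 hlam hℓ x z) (x, z)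

theorem convexOn_moreauEnv2 (hlam : 0 < lam) (hℓ : ∀ u, ℓ u + c ≤ S u.1 u.2)
    (hS : ConvexOn ℝ univ (uncurry S)) : ConvexOn ℝ univ (uncurry (moreauEnv2 S lam)) := by
  have hquad := ((convexOn_norm_comp_sq (LinearMap.fst ℝ H E ∘ₗ
    (LinearMap.fst ℝ (H × E) (H × E) - LinearMap.snd ℝ (H × E) (H × E)))).add
    (convexOn_norm_comp_sq (LinearMap.snd ℝ H E ∘ₗ
    (LinearMap.fst ℝ (H × E) (H × E) - LinearMap.snd ℝ (H × E) (H × E))))).smul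
    (inv_nonneg.2 (by positivity : (0 : ℝ) ≤ 2 * lam))
  have hF : ConvexOn ℝ univ fun p : (H × E) × (H × E) =>
      S p.2.1 p.2.2 + (‖p.1.1 - p.2.1‖ ^ 2 + ‖p.1.2 - p.2.2‖ ^ 2) / (2 * lam) := by
    have hSsnd : ConvexOn ℝ univ fun p : (H × E) × (H × E) => S p.2.1 p.2.2 :=
      hS.comp_linearMap (LinearMap.snd ℝ (H × E) (H × E))
    refine (hSsnd.add hquad).congr fun p _ => ?_
    simp [div_eq_inv_mul]
  exact hF.iInf_snd fun w => bddBelow_range_moreauEnv2 hlam hℓ w.1 w.2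

end MoreauEnvelope

theorem stmt9_general
    {H Y : Type*} [NormedAddCommGroup H] [InnerProductSpace ℝ H]
    [NormedAddCommGroup Y] [NormedSpace ℝ Y] [CompleteSpace Y] {m : ℕ}
    {Ω : Type*} [MeasurableSpace Ω] (P : Measure Ω) [IsProbabilityMeasure P]
    (ξ : Ω → EuclideanSpace ℝ (Fin m)) (hξ : Measurable ξ)
    (hlaw : P.map ξ ≪ volume)
    (C : Set (WeakDual ℝ Y)) (hCne : C.Nonempty) (hCcpt : IsCompact C)
    (Φ : H → EuclideanSpace ℝ (Fin m) → Y)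
    (hΦ : Continuous fun q : H × EuclideanSpace ℝ (Fin m) => Φ q.1 q.2)
    (h : H → ℝ) (hC1 : ContDiff ℝ 1 h)
    (hscal : ∀ v ∈ C, ConvexOn ℝ Set.univ
      (fun q : H × EuclideanSpace ℝ (Fin m) => v (Φ q.1 q.2) + h q.1))
    (S : H → EuclideanSpace ℝ (Fin m) → ℝ)
    (hS : ∀ x z, S x z = ⨆ v : C, ((v : WeakDual ℝ Y) (Φ x z) + h x))
    (φ : H → ℝ)
    (hφ : ∀ x, φ x = (P {ω | S x (ξ ω) ≤ h x}).toReal)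
    (φl : ℝ → H → ℝ)
    (hφl : ∀ lam x, φl lam x = (P {ω | moreauEnv2 S lam x (ξ ω) ≤ h x}).toReal)
    :
    ∀ x₀ : H, (∃ z : EuclideanSpace ℝ (Fin m), S x₀ z < h x₀) →
      ContinuousAt φ x₀ ∧ (∀ lam : ℝ, 0 < lam → ContinuousAt (φl lam) x₀) := by
  rintro x₀ ⟨z₀, hz₀⟩
  have : Nonempty C := hCne.to_subtype
  have hh : Continuous h := hC1.continuous
  have hSsup : uncurry S = fun q => ⨆ v : C, ((v : WeakDual ℝ Y) (Φ q.1 q.2) + h q.1) :=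
    funext fun q => hS q.1 q.2
  have hSconv : ConvexOn ℝ univ (uncurry S) := hSsup ▸ hCcpt.convexOn_iSup_apply_add hscal
  have hScont : Continuous (uncurry S) :=
    hSsup ▸ hCcpt.continuous_iSup_apply_add hΦ (hh.comp continuous_fst) hscal
  refine ⟨?_, fun lam hlam => ?_⟩
  · simpa only [← hφ] using continuousAt_toReal_measure_setOf_le_of_convexOn volume P hξ hlaw
      hScont hh.continuousAt (hSconv.uncurry_left x₀) hz₀
  · obtain ⟨ℓ, c, hℓ⟩ := hSconv.exists_continuousLinearMap_add_const_le hScont.lowerSemicontinuous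
    have hMconv := convexOn_moreauEnv2 hlam hℓ hSconv
    have hMcont : Continuous (uncurry (moreauEnv2 S lam)) :=
      hMconv.continuous_of_le hScont fun q => moreauEnv2_le hlam hℓ q.1 q.2
    simpa only [← hφl] using continuousAt_toReal_measure_setOf_le_of_convexOn volume P hξ hlaw
      hMcont hh.continuousAt (hMconv.uncurry_left x₀) ((moreauEnv2_le hlam hℓ x₀ z₀).trans_lt hz₀)

/-- Theorem 3.1(e): `φ` and each `φ_λ` (`λ > 0`) are (norm-)continuous at every point of
the open set `𝒟 = {x | ∃ z, S(x,z) < h(x)}`. -/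
theorem stmt9
    {H Y : Type*} [NormedAddCommGroup H] [InnerProductSpace ℝ H] [CompleteSpace H]
    [SecondCountableTopology H]
    [NormedAddCommGroup Y] [NormedSpace ℝ Y] [CompleteSpace Y] {m : ℕ}
    {Ω : Type*} [MeasurableSpace Ω] (P : Measure Ω) [IsProbabilityMeasure P]
    (ξ : Ω → EuclideanSpace ℝ (Fin m)) (hξ : Measurable ξ)
    (hlaw : P.map ξ ≪ volume)
    (K : Set Y) (hKne : K.Nonempty) (hKcl : IsClosed K) (hKconv : Convex ℝ K)
    (hKcone : ∀ c : ℝ, 0 ≤ c → ∀ y ∈ K, c • y ∈ K)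
    (C : Set (WeakDual ℝ Y)) (hCne : C.Nonempty) (hCconv : Convex ℝ C) (hCcpt : IsCompact C)
    (hCgen : closure {w : WeakDual ℝ Y | ∃ c : ℝ, 0 ≤ c ∧ ∃ v ∈ C, w = c • v}
      = {w : WeakDual ℝ Y | ∀ y ∈ K, 0 ≤ w y})
    (Φ : H → EuclideanSpace ℝ (Fin m) → Y)
    (hΦ : Continuous fun q : H × EuclideanSpace ℝ (Fin m) => Φ q.1 q.2)
    (h : H → ℝ) (hconv : ConvexOn ℝ Set.univ h) (hC1 : ContDiff ℝ 1 h)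
    (hscal : ∀ v ∈ C, ConvexOn ℝ Set.univ
      (fun q : H × EuclideanSpace ℝ (Fin m) => v (Φ q.1 q.2) + h q.1))
    (S : H → EuclideanSpace ℝ (Fin m) → ℝ)
    (hS : ∀ x z, S x z = ⨆ v : C, ((v : WeakDual ℝ Y) (Φ x z) + h x))
    (φ : H → ℝ)
    (hφ : ∀ x, φ x = (P {ω | S x (ξ ω) ≤ h x}).toReal)
    (φl : ℝ → H → ℝ)
    (hφl : ∀ lam x, φl lam x = (P {ω | moreauEnv2 S lam x (ξ ω) ≤ h x}).toReal)
    :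
    ∀ x₀ : H, (∃ z : EuclideanSpace ℝ (Fin m), S x₀ z < h x₀) →
      ContinuousAt φ x₀ ∧ (∀ lam : ℝ, 0 < lam → ContinuousAt (φl lam) x₀) :=
  stmt9_general P ξ hξ hlaw C hCne hCcpt Φ hΦ h hC1 hscal S hS φ hφ φl hφl
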